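/- Harmony for λ_sou: if t is a closed and clash-free term of the source calculus λ_sou, then either t is a value or t →_sou u for some closed and clash-free term u. -/

import Mathlib

set_option linter.unusedVariables false

namespace CC

/-- Terms of the source calculus λ_sou (de Bruijn indices, multi-binders). -/
inductive STm : Type
| var : Nat → STm
| lam : Nat → STm → STm
| app : STm → STm → STm
| proj : Nat → STm → STm
| tup : List STm → STm

instance : Inhabited STm := ⟨.var 0⟩

namespace STm

/-- Size of a source term. -/
def size : STm → Nat
| var _ => 1
| lam n t => t.size + n + 1
| app t u => t.size + u.size + 1
| proj _ t => t.size + 1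
| tup ts => ts.length + (ts.attach.map (fun ⟨a, ha⟩ => a.size)).sum
decreasing_by all_goals first
  | (have := List.sizeOf_lt_of_mem ha; omega)
  | decreasing_tactic

/-- Renaming of free de Bruijn indices. -/
def rename (ρ : Nat → Nat) : STm → STm
| var i => var (ρ i)
| lam n t => lam n (t.rename (fun i => if i < n then i else ρ (i - n) + n))
| app t u => app (t.rename ρ) (u.rename ρ)
| proj i t => proj i (t.rename ρ)
| tup ts => tup (ts.attach.map (fun ⟨a, ha⟩ => a.rename ρ))
decreasing_by all_goals first
  | (have := List.sizeOf_lt_of_mem ha; omega)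
  | decreasing_tactic

/-- Parallel substitution. -/
def subst (σ : Nat → STm) : STm → STm
| var i => σ i
| lam n t => lam n (t.subst (fun i => if i < n then var i else (σ (i - n)).rename (· + n)))
| app t u => app (t.subst σ) (u.subst σ)
| proj i t => proj i (t.subst σ)
| tup ts => tup (ts.attach.map (fun ⟨a, ha⟩ => a.subst σ))
decreasing_by all_goals first
  | (have := List.sizeOf_lt_of_mem ha; omega)
  | decreasing_tactic

/-- Simultaneous substitution of a list of terms for indices `0..vs.length-1`. -/
def substList (vs : List STm) (t : STm) : STm :=
  t.subst (fun i => if i < vs.length then vs.getD i default else var (i - vs.length))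

end STm

/-- Values of λ_sou: (multi-variable) abstractions and tuples of values. -/
inductive SVal : STm → Prop
| lam {n t} : SVal (.lam n t)
| tup {vs} : (∀ v ∈ vs, SVal v) → SVal (.tup vs)

/-- All free de Bruijn indices of `t` are `< k`. `FB 0 t` means `t` is closed. -/
inductive SFB : Nat → STm → Prop
| var {k i} : i < k → SFB k (.var i)
| lam {k n t} : SFB (k + n) t → SFB k (.lam n t)
| app {k t u} : SFB k t → SFB k u → SFB k (.app t u)
| proj {k i t} : SFB k t → SFB k (.proj i t)
| tup {k ts} : (∀ t ∈ ts, SFB k t) → SFB k (.tup ts)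

/-- Labels for the two rewrite rules. -/
inductive Lab | beta | pi
deriving DecidableEq

/-- Labelled weak right-to-left call-by-value reduction of λ_sou,
root rules closed under evaluation contexts. -/
inductive SStepL : Lab → STm → STm → Prop
| beta {n t vs} : (∀ v ∈ vs, SVal v) → vs.length = n →
    SStepL .beta (.app (.lam n t) (.tup vs)) (STm.substList vs t)
| proj {i vs} : (∀ v ∈ vs, SVal v) → i < vs.length →
    SStepL .pi (.proj i (.tup vs)) (vs.getD i default)
| appR {l t u u'} : SStepL l u u' → SStepL l (.app t u) (.app t u')
| appL {l v t t'} : SVal v → SStepL l t t' → SStepL l (.app t v) (.app t' v)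
| projC {l i t t'} : SStepL l t t' → SStepL l (.proj i t) (.proj i t')
| tupC {l ts t t' vs} : (∀ v ∈ vs, SVal v) → SStepL l t t' →
    SStepL l (.tup (ts ++ t :: vs)) (.tup (ts ++ t' :: vs))

/-- The reduction →_sou. -/
def SStep (t u : STm) : Prop := ∃ l, SStepL l t u

/-- Clashes of λ_sou: root clashes closed under evaluation contexts. -/
inductive SClash : STm → Prop
| rproj {i v} : SVal v → (∀ vs, v = .tup vs → vs.length ≤ i) → SClash (.proj i v)
| rapp {n t v} : SVal v → (∀ vs, v = .tup vs → vs.length ≠ n) → SClash (.app (.lam n t) v)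
| rtup {rs s} : SClash (.app (.tup rs) s)
| cAppR {t u} : SClash u → SClash (.app t u)
| cAppL {t v} : SVal v → SClash t → SClash (.app t v)
| cProj {i t} : SClash t → SClash (.proj i t)
| cTup {ts t vs} : (∀ v ∈ vs, SVal v) → SClash t → SClash (.tup (ts ++ t :: vs))

/-- Clash-freeness (coinductively: no reduct is a clash). -/
def SClashFree (t : STm) : Prop := ∀ u, Relation.ReflTransGen SStep t u → ¬ SClash u

/-- `k`-fold iteration of a reduction. -/
def iterRel {α : Type _} (R : α → α → Prop) : Nat → α → α → Prop
| 0, t, u => t = u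
| (k+1), t, u => ∃ s, R t s ∧ iterRel R k s u

end CC

namespace CC

lemma fb_rename {k k' : Nat} {ρ : Nat → Nat} {t : STm} (h : SFB k t)
    (hρ : ∀ i, i < k → ρ i < k') : SFB k' (t.rename ρ) := by
  induction h generalizing k' ρ with
  | var hi => simpa [STm.rename] using SFB.var (hρ _ hi)
  | lam ht ih =>
      simp only [STm.rename]
      exact SFB.lam (ih (fun i hi => by split <;> [omega; exact Nat.add_lt_add_right (hρ _ (by omega)) _]))
  | app ht hu iht ihu => simpa [STm.rename] using SFB.app (iht hρ) (ihu hρ)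
  | proj ht ih => simpa [STm.rename] using SFB.proj (ih hρ)
  | tup hts ih =>
      simp only [STm.rename]
      refine SFB.tup ?_
      intro x hx
      rcases List.mem_map.1 hx with ⟨⟨a, ha⟩, _, rfl⟩
      exact ih a ha hρ

lemma fb_subst {k k' : Nat} {σ : Nat → STm} {t : STm} (h : SFB k t)
    (hσ : ∀ i, i < k → SFB k' (σ i)) : SFB k' (t.subst σ) := by
  induction h generalizing k' σ with
  | var hi => simpa [STm.subst] using hσ _ hi
  | lam ht ih =>
      simp only [STm.subst]
      refine SFB.lam (ih (fun i hi => ?_))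
      split
      · exact SFB.var (by omega)
      · exact fb_rename (hσ _ (by omega)) (fun j hj => by omega)
  | app ht hu iht ihu => simpa [STm.subst] using SFB.app (iht hσ) (ihu hσ)
  | proj ht ih => simpa [STm.subst] using SFB.proj (ih hσ)
  | tup hts ih =>
      simp only [STm.subst]
      refine SFB.tup ?_
      intro x hx
      rcases List.mem_map.1 hx with ⟨⟨a, ha⟩, _, rfl⟩
      exact ih a ha hσ

lemma fb_substList {vs : List STm} {t : STm} (h : SFB vs.length t)
    (hvs : ∀ v ∈ vs, SFB 0 v) : SFB 0 (STm.substList vs t) := by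
  refine fb_subst h (fun i hi => ?_)
  simp only [if_pos hi]
  have : vs.getD i default = vs[i]'hi := List.getD_eq_getElem vs default hi
  rw [this]
  exact hvs _ (List.getElem_mem hi)

lemma fb_step {l : Lab} {t u : STm} (hs : SStepL l t u) (h : SFB 0 t) : SFB 0 u := by
  induction hs with
  | @beta n t vs hv hlen =>
      rcases h with _ | _ | ⟨hlam, htup⟩
      rcases hlam with _ | ⟨ht⟩
      rcases htup with _ | _ | _ | _ | ⟨hts⟩
      exact fb_substList (by simpa [hlen] using ht) hts
  | @proj i vs hv hi =>
      rcases h with _ | _ | _ | ⟨htup⟩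
      rcases htup with _ | _ | _ | _ | ⟨hts⟩
      have : vs.getD i default = vs[i]'hi := List.getD_eq_getElem vs default hi
      rw [this]
      exact hts _ (List.getElem_mem hi)
  | appR _ ih =>
      rcases h with _ | _ | ⟨ht, hu⟩
      exact SFB.app ht (ih hu)
  | appL _ _ ih =>
      rcases h with _ | _ | ⟨ht, hu⟩
      exact SFB.app (ih ht) hu
  | projC _ ih =>
      rcases h with _ | _ | _ | ⟨ht⟩
      exact SFB.proj (ih ht)
  | @tupC l ts t t' vs _ _ ih =>
      rcases h with _ | _ | _ | _ | ⟨hts⟩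
      refine SFB.tup ?_
      intro x hx
      rcases List.mem_append.1 hx with hx | hx
      · exact hts _ (List.mem_append.2 (Or.inl hx))
      · rcases List.mem_cons.1 hx with rfl | hx
        · exact ih (hts _ (List.mem_append.2 (Or.inr List.mem_cons_self)))
        · exact hts _ (List.mem_append.2 (Or.inr (List.mem_cons_of_mem _ hx)))

lemma list_split (ts : List STm) :
    (∀ v ∈ ts, SVal v) ∨
    ∃ pre t post, ts = pre ++ t :: post ∧ (∀ v ∈ post, SVal v) ∧ ¬ SVal t := by
  induction ts using List.reverseRecOn with
  | nil => exact Or.inl (by simp)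
  | append_singleton ts a ih =>
      by_cases ha : SVal a
      · rcases ih with hall | ⟨pre, t, post, rfl, hpost, hnt⟩
        · refine Or.inl ?_
          intro v hv
          rcases List.mem_append.1 hv with hv | hv
          · exact hall _ hv
          · rcases List.mem_singleton.1 hv with rfl; exact ha
        · refine Or.inr ⟨pre, t, post ++ [a], by simp, ?_, hnt⟩
          intro v hv
          rcases List.mem_append.1 hv with hv | hv
          · exact hpost _ hv
          · rcases List.mem_singleton.1 hv with rfl; exact ha
      · exact Or.inr ⟨ts, a, [], by simp, by simp, ha⟩

theorem progress_aux : ∀ N : Nat, ∀ t : STm, sizeOf t < N → SFB 0 t →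
    SVal t ∨ SClash t ∨ ∃ u, SStep t u := by
  intro N
  induction N with
  | zero => intro t ht; omega
  | succ N ih =>
    intro t ht h
    match t with
    | .var i => rcases h with ⟨hi⟩; omega
    | .lam n s => exact Or.inl SVal.lam
    | .app s u =>
        have hsz : sizeOf (STm.app s u) = 1 + sizeOf s + sizeOf u := rfl
        rcases h with _ | _ | ⟨hs, hu⟩
        rcases ih u (by omega) hu with hv | hcl | ⟨u', l, hstep⟩
        · rcases ih s (by omega) hs with hvs | hcl | ⟨s', l, hstep⟩
          · match s, hvs with
            | .lam n b, _ =>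
                match u, hv with
                | .tup vs, SVal.tup hvals =>
                    by_cases hlen : vs.length = n
                    · exact Or.inr (Or.inr ⟨_, .beta, SStepL.beta hvals hlen⟩)
                    · exact Or.inr (Or.inl (SClash.rapp (SVal.tup hvals) (fun ws hw => by
                        injection hw with hw; subst hw; exact hlen)))
                | .lam m b', _ =>
                    exact Or.inr (Or.inl (SClash.rapp SVal.lam (by intro vs h; cases h)))
            | .tup rs, _ => exact Or.inr (Or.inl SClash.rtup)
          · exact Or.inr (Or.inl (SClash.cAppL hv hcl))
          · exact Or.inr (Or.inr ⟨_, l, SStepL.appL hv hstep⟩)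
        · exact Or.inr (Or.inl (SClash.cAppR hcl))
        · exact Or.inr (Or.inr ⟨_, l, SStepL.appR hstep⟩)
    | .proj i s =>
        have hsz : sizeOf (STm.proj i s) = 1 + sizeOf i + sizeOf s := rfl
        rcases h with _ | _ | _ | ⟨hs⟩
        rcases ih s (by omega) hs with hv | hcl | ⟨s', l, hstep⟩
        · match s, hv with
          | .tup vs, SVal.tup hvals =>
              by_cases hi : i < vs.length
              · exact Or.inr (Or.inr ⟨_, .pi, SStepL.proj hvals hi⟩)
              · exact Or.inr (Or.inl (SClash.rproj (SVal.tup hvals) (fun ws hw => by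
                  injection hw with hw; subst hw; omega)))
          | .lam m b, _ => exact Or.inr (Or.inl (SClash.rproj SVal.lam (by intro vs h; cases h)))
        · exact Or.inr (Or.inl (SClash.cProj hcl))
        · exact Or.inr (Or.inr ⟨_, l, SStepL.projC hstep⟩)
    | .tup ts =>
        have hsz : sizeOf (STm.tup ts) = 1 + sizeOf ts := by simp
        rcases h with _ | _ | _ | _ | ⟨hts⟩
        rcases list_split ts with hall | ⟨pre, s, post, heq, hpost, hns⟩
        · exact Or.inl (SVal.tup hall)
        · subst heq
          have hsmem : s ∈ pre ++ s :: post :=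
            List.mem_append.2 (Or.inr List.mem_cons_self)
          have hsz2 := List.sizeOf_lt_of_mem hsmem
          rcases ih s (by omega) (hts _ hsmem) with hv | hcl | ⟨s', l, hstep⟩
          · exact absurd hv hns
          · exact Or.inr (Or.inl (SClash.cTup hpost hcl))
          · exact Or.inr (Or.inr ⟨_, l, SStepL.tupC hpost hstep⟩)

theorem progress (t : STm) (h : SFB 0 t) :
    SVal t ∨ SClash t ∨ ∃ u, SStep t u :=
  progress_aux (sizeOf t + 1) t (Nat.lt_succ_self _) h

/-- Harmony for λ_sou: a closed clash-free term either is a value or reduces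
to some closed clash-free term. -/
theorem sou_harmony (t : STm) (hc : SFB 0 t) (hcf : SClashFree t) :
    SVal t ∨ ∃ u : STm, SStep t u ∧ SFB 0 u ∧ SClashFree u := by
  rcases progress t hc with hv | hcl | ⟨u, l, hstep⟩
  · exact Or.inl hv
  · exact absurd hcl (hcf t Relation.ReflTransGen.refl)
  · refine Or.inr ⟨u, ⟨l, hstep⟩, fb_step hstep hc, ?_⟩
    intro w hw
    exact hcf w (Relation.ReflTransGen.head ⟨l, hstep⟩ hw)

end CC
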